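/- arXiv:2203.13460 — 3 statements merged into one kernel-verified Lean document; each statement's English description precedes it below -/
import Mathlib

section
/- Let p be a prime with p ≡ 1 (mod 4), let S* be the nonzero squares and N the non-squares of (ℤ/pℤ)*. Then |N ∩ (N + 1)| = (p - 1)/4, i.e., the number of x such that both x and x - 1 are non-squares equals (p-1)/4. -/
/-!
With `χ` the quadratic character, `(1 - χ x)(1 - χ (x - 1))` is `4` when `x` and `x - 1` are
both non-squares, `1 - χ(-1)` at `x = 0`, and `0` otherwise. Summing over a finite field `F`,
the linear terms vanish and `∑ χ(x) χ(x - 1) = χ(-1) J(χ, χ) = -1`, so four times the count is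
`|F| - 2 + χ(-1)`, which is `p - 1` when `p ≡ 1 (mod 4)`.
-/

open Finset

section FiniteField

variable {F : Type*} [Field F] [Fintype F] [DecidableEq F]

/-- `χ(x - 1) = χ(-1) χ(1 - x)` turns the sum into `χ(-1) J(χ, χ)`, and `J(χ, χ⁻¹) = -χ(-1)`. -/
theorem quadraticChar_sum_mul_sub_one (hF : ringChar F ≠ 2) :
    ∑ x : F, quadraticChar F x * quadraticChar F (x - 1) = -1 := by
  set χ := quadraticChar F
  have hJ : jacobiSum χ χ = -χ (-1) := by
    simpa only [(quadraticChar_isQuadratic F).inv] using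
      jacobiSum_nontrivial_inv (quadraticChar_ne_one hF)
  have hsq : χ (-1) * χ (-1) = 1 := by
    rw [← map_mul, neg_one_mul, neg_neg, map_one]
  calc ∑ x : F, χ x * χ (x - 1) = χ (-1) * jacobiSum χ χ := by
        rw [jacobiSum, mul_sum]
        refine sum_congr rfl fun x _ ↦ ?_
        rw [← neg_sub, ← neg_one_mul (1 - x), map_mul]
        ring
    _ = -1 := by rw [hJ, mul_neg, hsq]

theorem quadraticChar_sum_sub_one (hF : ringChar F ≠ 2) :
    ∑ x : F, quadraticChar F (x - 1) = 0 :=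
  (Equiv.subRight (1 : F)).sum_comp (quadraticChar F) ▸ quadraticChar_sum_zero hF

theorem one_sub_quadraticChar_mul_one_sub_quadraticChar_sub_one (x : F) :
    (1 - quadraticChar F x) * (1 - quadraticChar F (x - 1)) =
      (if ¬IsSquare x ∧ ¬IsSquare (x - 1) then 4 else 0) +
        if x = 0 then 1 - quadraticChar F (-1) else 0 := by
  rcases eq_or_ne x 0 with rfl | hx0
  · simp
  rcases eq_or_ne x 1 with rfl | hx1
  · simp
  have hx1' : x - 1 ≠ 0 := sub_ne_zero.mpr hx1
  simp only [hx0, if_false, add_zero, ← quadraticChar_neg_one_iff_not_isSquare]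
  rcases quadraticChar_dichotomy hx0 with h | h <;>
    rcases quadraticChar_dichotomy hx1' with h' | h' <;> simp [h, h']

theorem four_mul_card_nonsquare_nonsquare_sub_one (hF : ringChar F ≠ 2) :
    (4 * #{x : F | ¬IsSquare x ∧ ¬IsSquare (x - 1)} : ℤ) =
      Fintype.card F - 2 + quadraticChar F (-1) := by
  let χ := quadraticChar F
  have hexpand : ∑ x : F, (1 - χ x) * (1 - χ (x - 1)) = Fintype.card F - 1 := by
    simp only [sub_mul, mul_sub, one_mul, mul_one, sum_sub_distrib]
    rw [quadraticChar_sum_zero hF, quadraticChar_sum_sub_one hF, quadraticChar_sum_mul_sub_one hF,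
      sum_const, card_univ, nsmul_one]
    ring
  have hcount : ∑ x : F, (1 - χ x) * (1 - χ (x - 1)) =
      4 * #{x : F | ¬IsSquare x ∧ ¬IsSquare (x - 1)} + (1 - χ (-1)) := by
    simp only [χ, one_sub_quadraticChar_mul_one_sub_quadraticChar_sub_one, sum_add_distrib,
      sum_ite, sum_const, nsmul_eq_mul, filter_eq', mem_univ,
      if_true, card_singleton, Nat.cast_one, one_mul]
    ring
  linarith

end FiniteField

/-- For a prime `p ≡ 1 (mod 4)`, with `N` the non-squares of `(ℤ/pℤ)*`,
the number of `x` such that both `x` and `x - 1` are non-squares equals `(p - 1) / 4`. -/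
theorem stmt_2 (p : ℕ) (hp : p.Prime) (hp1 : p % 4 = 1) :
    Nat.card {x : ZMod p // (x ≠ 0 ∧ ¬ IsSquare x) ∧ (x - 1 ≠ 0 ∧ ¬ IsSquare (x - 1))} =
      (p - 1) / 4 := by
  classical
  have : Fact p.Prime := ⟨hp⟩
  have hchar : ringChar (ZMod p) ≠ 2 := by rw [ZMod.ringChar_zmod_n]; omega
  have hneg : quadraticChar (ZMod p) (-1) = 1 :=
    (quadraticChar_one_iff_isSquare (neg_ne_zero.mpr one_ne_zero)).mpr
      (ZMod.exists_sq_eq_neg_one_iff.mpr (by omega))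
  have hcard : Nat.card {x : ZMod p // (x ≠ 0 ∧ ¬ IsSquare x) ∧ (x - 1 ≠ 0 ∧ ¬ IsSquare (x - 1))}
      = #{x : ZMod p | ¬IsSquare x ∧ ¬IsSquare (x - 1)} := by
    rw [Nat.card_eq_fintype_card, Fintype.card_subtype]
    congr 1
    refine filter_congr fun x _ ↦ ⟨fun h ↦ ⟨h.1.2, h.2.2⟩, fun h ↦ ⟨⟨?_, h.1⟩, ?_, h.2⟩⟩
    · rintro rfl; exact h.1 IsSquare.zero
    · intro h0; exact h.2 (h0 ▸ IsSquare.zero)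
  have key := four_mul_card_nonsquare_nonsquare_sub_one hchar
  rw [hneg, ZMod.card] at key
  omega
end

section
/- Let q be an odd prime power, S* the nonzero squares and N the non-squares of F_q, a, b ∈ F_q* with a ≠ b. Assuming |Σ_{x∈F_q} η(x(x-a)(x-b))| ≤ 2√q for the quadratic character η, the number of x ∈ F_q with x ∈ S*, x - a ∈ N, and x - b ∈ N is at least ⌊(q - 11 - 2√q)/8⌋. -/
/-!
Expand `(1 + η x) (1 - η (x - a)) (1 - η (x - b))` and sum over `x`. The linear terms sum to `0`,
and each quadratic term `Σ η ((x - c) (x - d))` with `c ≠ d` becomes, after the affine change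
`x = d + (c - d) y`, the Jacobi sum `J(η, η) = -η (-1)` times `η (-1)`, i.e. `-1`. So the total is
`q + 1 + Σ η (x (x - a) (x - b))`. On the other side, the summand is `8` when `x` is counted, `0` when
none of `x, x - a, x - b` vanishes and `x` is not counted, and at most `4` for `x ∈ {0, a, b}`.
Hence `q + 1 - 2√q ≤ 8 n + 12` for the count `n`.
-/

open Finset

section

variable {F : Type*} [Field F] [Fintype F] [DecidableEq F]

lemma quadraticChar_sum_sub (hF : ringChar F ≠ 2) (c : F) :
    ∑ x : F, quadraticChar F (x - c) = 0 := by
  rw [Fintype.sum_equiv (Equiv.subRight c) (fun x => quadraticChar F (x - c)) _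
    fun _ => rfl, quadraticChar_sum_zero hF]

lemma quadraticChar_sum_sub_mul_sub (hF : ringChar F ≠ 2) {a b : F} (hab : a ≠ b) :
    ∑ x : F, quadraticChar F ((x - a) * (x - b)) = -1 := by
  set χ := quadraticChar F
  have hd : a - b ≠ 0 := sub_ne_zero.mpr hab
  have hχ1 : χ (-1) * χ (-1) = 1 := by
    rw [← map_mul, neg_one_mul, neg_neg, map_one]
  have hJ : jacobiSum χ χ = -χ (-1) := by
    simpa only [(quadraticChar_isQuadratic F).inv] using
      jacobiSum_nontrivial_inv (quadraticChar_ne_one hF)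
  calc ∑ x : F, χ ((x - a) * (x - b))
      = ∑ y : F, χ ((b + (a - b) * y - a) * (b + (a - b) * y - b)) :=
        (Fintype.sum_bijective _ ((AddGroup.addLeft_bijective b).comp (mulLeft_bijective₀ _ hd))
          _ _ fun _ => rfl).symm
    _ = ∑ y : F, χ (-1) * (χ y * χ (1 - y)) := by
        congr 1 with y
        rw [show (b + (a - b) * y - a) * (b + (a - b) * y - b) = (a - b) ^ 2 * (-1 * (y * (1 - y)))
          by ring, map_mul, quadraticChar_sq_one' hd, one_mul, map_mul, map_mul]
    _ = -1 := by rw [← mul_sum, ← jacobiSum, hJ]; linear_combination -hχ1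

lemma sum_one_add_mul_one_sub_mul_one_sub (hF : ringChar F ≠ 2) {a b : F} (ha : a ≠ 0)
    (hb : b ≠ 0) (hab : a ≠ b) :
    ∑ x : F, (1 + quadraticChar F x) * (1 - quadraticChar F (x - a)) *
        (1 - quadraticChar F (x - b)) =
      Fintype.card F + 1 + ∑ x : F, quadraticChar F (x * (x - a) * (x - b)) := by
  set χ := quadraticChar F
  have h0 := quadraticChar_sum_sub hF 0
  have h0a := quadraticChar_sum_sub_mul_sub hF ha.symm
  have h0b := quadraticChar_sum_sub_mul_sub hF hb.symm
  simp only [sub_zero] at h0 h0a h0b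
  calc _ = ∑ x : F, (1 + χ x - χ (x - a) - χ (x - b) - χ (x * (x - a)) - χ (x * (x - b)) +
          χ ((x - a) * (x - b)) + χ (x * (x - a) * (x - b))) := by
        congr 1 with x
        simp only [map_mul]
        ring
    _ = _ := by
        simp only [sum_add_distrib, sum_sub_distrib, sum_const, card_univ, nsmul_one]
        rw [h0, h0a, h0b, quadraticChar_sum_sub hF, quadraticChar_sum_sub hF,
          quadraticChar_sum_sub_mul_sub hF hab]
        ring

lemma Int.one_add_mul_one_sub_mul_one_sub_le {u v w : ℤ} (hu : u = 0 ∨ u = 1 ∨ u = -1)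
    (hv : v = 0 ∨ v = 1 ∨ v = -1) (hw : w = 0 ∨ w = 1 ∨ w = -1) :
    (1 + u) * (1 - v) * (1 - w) ≤
      8 * (if u = 1 ∧ v = -1 ∧ w = -1 then 1 else 0) +
        4 * (if u = 0 ∨ v = 0 ∨ w = 0 then 1 else 0) := by
  rcases hu with rfl | rfl | rfl <;> rcases hv with rfl | rfl | rfl <;>
    rcases hw with rfl | rfl | rfl <;> norm_num

lemma quadraticChar_eq_one_iff {x : F} : quadraticChar F x = 1 ↔ IsSquare x ∧ x ≠ 0 := by
  by_cases hx : x = 0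
  · simp [hx]
  · rw [quadraticChar_one_iff_isSquare hx]
    tauto

lemma quadraticChar_eq_neg_one_iff {x : F} : quadraticChar F x = -1 ↔ x ≠ 0 ∧ ¬IsSquare x := by
  rw [quadraticChar_neg_one_iff_not_isSquare]
  exact ⟨fun h => ⟨by rintro rfl; exact h IsSquare.zero, h⟩, And.right⟩

lemma sum_one_add_mul_one_sub_mul_one_sub_le (a b : F) :
    ∑ x : F, (1 + quadraticChar F x) * (1 - quadraticChar F (x - a)) *
        (1 - quadraticChar F (x - b)) ≤
      8 * (Nat.card {x : F // (IsSquare x ∧ x ≠ 0) ∧ (x - a ≠ 0 ∧ ¬ IsSquare (x - a)) ∧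
        (x - b ≠ 0 ∧ ¬ IsSquare (x - b))} : ℤ) + 12 := by
  set χ := quadraticChar F
  have hχ := quadraticChar_isQuadratic F
  have hcount : #{x | χ x = 1 ∧ χ (x - a) = -1 ∧ χ (x - b) = -1} =
      Nat.card {x : F // (IsSquare x ∧ x ≠ 0) ∧ (x - a ≠ 0 ∧ ¬ IsSquare (x - a)) ∧
        (x - b ≠ 0 ∧ ¬ IsSquare (x - b))} := by
    simp only [Nat.card_eq_fintype_card, Fintype.card_subtype, quadraticChar_eq_one_iff,
      quadraticChar_eq_neg_one_iff, χ]
  have hzeros : #{x | χ x = 0 ∨ χ (x - a) = 0 ∨ χ (x - b) = 0} ≤ 3 := by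
    refine (card_le_card fun x hx => ?_).trans (card_le_three (a := 0) (b := a) (c := b))
    simpa only [χ, mem_filter_univ, quadraticChar_eq_zero_iff, sub_eq_zero, mem_insert,
      mem_singleton] using hx
  calc _ ≤ ∑ x : F, (8 * (if χ x = 1 ∧ χ (x - a) = -1 ∧ χ (x - b) = -1 then 1 else 0) +
          4 * (if χ x = 0 ∨ χ (x - a) = 0 ∨ χ (x - b) = 0 then 1 else 0)) :=
        sum_le_sum fun x _ => Int.one_add_mul_one_sub_mul_one_sub_le (hχ x) (hχ _) (hχ _)
    _ = 8 * (#{x | χ x = 1 ∧ χ (x - a) = -1 ∧ χ (x - b) = -1} : ℤ) +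
          4 * (#{x | χ x = 0 ∨ χ (x - a) = 0 ∨ χ (x - b) = 0} : ℤ) := by
        simp only [sum_add_distrib, ← mul_sum, sum_boole]
    _ ≤ _ := by
        rw [hcount]
        omega

end

/-- Let `q` be an odd prime power, `S*` the nonzero squares and `N` the non-squares of `F_q`,
and `a ≠ b` in `F_q*`. Assuming the Weil bound `|Σ_x η(x(x-a)(x-b))| ≤ 2√q`, the number of
`x` with `x ∈ S*`, `x - a ∈ N`, `x - b ∈ N` is at least `⌊(q - 11 - 2√q)/8⌋`. -/
theorem stmt_7 (F : Type*) [Field F] [Fintype F] [DecidableEq F]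
    (hodd : Odd (Fintype.card F)) (a b : F) (ha : a ≠ 0) (hb : b ≠ 0) (hab : a ≠ b)
    (hweil : |∑ x : F, ((quadraticChar F (x * (x - a) * (x - b)) : ℤ) : ℝ)| ≤
      2 * Real.sqrt (Fintype.card F)) :
    ⌊((Fintype.card F : ℝ) - 11 - 2 * Real.sqrt (Fintype.card F)) / 8⌋ ≤
      (Nat.card {x : F // (IsSquare x ∧ x ≠ 0) ∧ (x - a ≠ 0 ∧ ¬ IsSquare (x - a)) ∧
        (x - b ≠ 0 ∧ ¬ IsSquare (x - b))} : ℤ) := by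
  have hF : ringChar F ≠ 2 := fun h =>
    Nat.not_even_iff_odd.mpr hodd (Nat.even_iff.mpr (FiniteField.even_card_of_char_two h))
  have hcount := sum_one_add_mul_one_sub_mul_one_sub_le a b
  rw [sum_one_add_mul_one_sub_mul_one_sub hF ha hb hab] at hcount
  have hcountR := (Int.cast_le (R := ℝ)).mpr hcount
  push_cast at hcountR
  rw [Int.floor_le_iff]
  push_cast
  linarith [neg_le_of_abs_le hweil]
end

section
/- Let X be a graph admitting an (m,p)-semiregular automorphism ρ, where p is a prime, i.e., ρ has exactly m orbits on vertices, each of size p. Let C be a cycle of length m in the quotient graph X_P on the orbit set P of ρ. Then the lift of C (the subgraph of X induced on edges projecting to edges of C) either contains a cycle of length mp, or consists of p disjoint m-cycles; in the latter case every vertex in an orbit S on C has exactly one neighbor in each adjacent orbit S' on C. -/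
open MulAction

variable {V : Type*} [Fintype V] [DecidableEq V]

/-- The quotient graph of `X` by the orbits of the permutation `σ`: vertices are the
`⟨σ⟩`-orbits, with two distinct orbits adjacent iff some vertex of one is adjacent in `X`
to some vertex of the other. -/
def quotGraph (σ : Equiv.Perm V) (X : SimpleGraph V) :
    SimpleGraph (Quotient (orbitRel (Subgroup.zpowers σ) V)) where
  Adj A B := A ≠ B ∧ ∃ a b : V, Quotient.mk _ a = A ∧ Quotient.mk _ b = B ∧ X.Adj a b
  symm := by
    constructor
    rintro A B ⟨hne, a, b, ha, hb, hab⟩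
    exact ⟨hne.symm, b, a, hb, ha, hab.symm⟩
  loopless := ⟨fun A h => h.1 rfl⟩

/-- The lift of a closed walk `c` in the quotient graph: the spanning subgraph of `X`
whose edges are those edges of `X` projecting to edges of `c`. -/
def liftGraph (σ : Equiv.Perm V) (X : SimpleGraph V)
    {u : Quotient (orbitRel (Subgroup.zpowers σ) V)} (c : (quotGraph σ X).Walk u u) :
    SimpleGraph V where
  Adj a b := X.Adj a b ∧ s(Quotient.mk _ a, Quotient.mk _ b) ∈ c.edges
  symm := by
    constructor
    rintro a b ⟨h1, h2⟩
    exact ⟨h1.symm, by rwa [Sym2.eq_swap]⟩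
  loopless := ⟨fun a h => X.ne_of_adj h.1 rfl⟩

/-!
Choose representatives `b i` of the orbits along `C` and voltages `s i ∈ ⟨ρ⟩` such that `b i` is
adjacent to `s i • b (i + 1)`. Walking along the lift of `C` from `b 0` leads after `m` steps to
`net • b 0`, where `net = ∏ s i`; since `⟨ρ⟩` acts freely, the lifted walk closes up into a cycle
of length `m * orderOf net`, which is `m * p` unless `net = 1`. If every choice of voltages gives
`net = 1`, then changing a single voltage shows that each voltage is forced, i.e. every vertex has
exactly one neighbour in each adjacent orbit along `C`, and the lift started at any vertex is an
`m`-cycle.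
-/

open SimpleGraph Finset

theorem SimpleGraph.exists_isCycle_of_periodic {W : Type*} {G : SimpleGraph W} {f : ℕ → W}
    {n : ℕ} (hn : 3 ≤ n) (hf : Function.Periodic f n) (hinj : Set.InjOn f (Set.Iio n))
    (hadj : ∀ k, G.Adj (f k) (f (k + 1))) :
    ∃ w : G.Walk (f 0) (f 0), w.IsCycle ∧ w.length = n := by
  obtain ⟨n, rfl⟩ : ∃ k, n = k + 3 := ⟨n - 3, by omega⟩
  have hsucc (i : Fin (n + 3)) : f (i + 1 : Fin (n + 3)) = f (i + 1) := by
    rw [Fin.val_add_one]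
    split_ifs with h
    · rw [h, Fin.val_last, ← Nat.zero_add (n + 2 + 1), hf]
    · rfl
  let φ : cycleGraph (n + 3) →g G :=
    { toFun := fun i => f i
      map_rel' := by
        rintro i j (h | h)
        · rw [sub_eq_iff_eq_add'.mp h, hsucc]; exact (hadj j).symm
        · rw [sub_eq_iff_eq_add'.mp h, hsucc]; exact hadj i }
  have hφ : Function.Injective φ := fun i j h => Fin.ext (hinj i.2 j.2 h)
  have h0 : φ 0 = f 0 := rfl
  refine ⟨((cycleGraph.cycle n).map φ).copy h0 h0, ?_, ?_⟩
  · rw [Walk.isCycle_copy, Walk.isCycle_map_iff_of_injective hφ]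
    exact cycleGraph.isCycle_cycle
  · rw [Walk.length_copy, Walk.length_map, cycleGraph.length_cycle]

theorem SimpleGraph.Walk.getVert_mod_length {W : Type*} {G : SimpleGraph W} {u : W}
    (c : G.Walk u u) {n : ℕ} (hn : n ≤ c.length) : c.getVert (n % c.length) = c.getVert n := by
  rcases hn.lt_or_eq with hn | rfl
  · rw [Nat.mod_eq_of_lt hn]
  · rw [Nat.mod_self, Walk.getVert_zero, Walk.getVert_length]

theorem SimpleGraph.Walk.IsCycle.exists_getVert_eq_of_length_eq_card {W : Type*} [Finite W]
    {G : SimpleGraph W} {u : W} {c : G.Walk u u} (hc : c.IsCycle) (hlen : c.length = Nat.card W)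
    (w : W) : ∃ i < c.length, c.getVert i = w := by
  classical
  have := Fintype.ofFinite W
  have hham : c.IsHamiltonianCycle := Walk.isHamiltonianCycle_iff_isCycle_and_length_eq.mpr
    ⟨hc, hlen.trans Nat.card_eq_fintype_card⟩
  obtain ⟨n, rfl, hn⟩ := Walk.mem_support_iff_exists_getVert.mp (hham.mem_support w)
  have := hc.three_le_length
  exact ⟨n % c.length, Nat.mod_lt _ (by omega), c.getVert_mod_length hn⟩

theorem Function.Periodic.prod_range_add_left {M : Type*} [CommGroup M] {f : ℕ → M} {m : ℕ}
    (hf : Function.Periodic f m) (k : ℕ) : ∏ i ∈ range m, f (k + i) = ∏ i ∈ range m, f i := by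
  induction k with
  | zero => simp
  | succ k ih =>
    have h := (prod_range_succ' (fun i => f (k + i)) m).symm.trans
      (prod_range_succ (fun i => f (k + i)) m)
    rw [Nat.add_zero, hf k] at h
    simp only [← Nat.add_assoc] at h
    simpa only [Nat.add_right_comm k 1, ih] using mul_right_cancel h

theorem Function.Periodic.eq_of_modEq {α : Type*} {f : ℕ → α} {m i j : ℕ}
    (hf : Function.Periodic f m) (h : i ≡ j [MOD m]) : f i = f j := by
  rw [← hf.map_mod_nat i, h, hf.map_mod_nat]

section Voltage

open scoped IsMulCommutative

variable {α H : Type*} [Group H] [MulAction H α]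

theorem MulAction.exists_smul_eq_of_mk_eq {x y : α}
    (h : Quotient.mk (orbitRel H α) x = Quotient.mk _ y) : ∃ g : H, g • y = x :=
  mem_orbit_iff.mp (Quotient.exact h)

variable {G : SimpleGraph α} (hG : ∀ (g : H) {x y : α}, G.Adj x y → G.Adj (g • x) (g • y))

include hG in
theorem exists_adj_smul_of_adj {x y x₀ y₀ : α} (h : G.Adj x y)
    (hx : Quotient.mk (orbitRel H α) x = Quotient.mk _ x₀)
    (hy : Quotient.mk (orbitRel H α) y = Quotient.mk _ y₀) : ∃ g : H, G.Adj x₀ (g • y₀) := by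
  obtain ⟨a, rfl⟩ := exists_smul_eq_of_mk_eq hx
  obtain ⟨b, rfl⟩ := exists_smul_eq_of_mk_eq hy
  exact ⟨a⁻¹ * b, by simpa [mul_smul] using hG a⁻¹ h⟩

structure VoltageCycle (H : Type*) [Group H] [MulAction H α] (G : SimpleGraph α) (m : ℕ) where
  b : ℕ → α
  s : ℕ → H
  periodic_b : Function.Periodic b m
  periodic_s : Function.Periodic s m
  modEq_of_smul_eq : ∀ i j (g : H), g • b i = b j → i ≡ j [MOD m]
  adj : ∀ i, G.Adj (b i) (s i • b (i + 1))

namespace VoltageCycle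

variable {m : ℕ} (P : VoltageCycle H G m)

theorem b_eq_of_modEq {i j : ℕ} (h : i ≡ j [MOD m]) : P.b i = P.b j :=
  P.periodic_b.eq_of_modEq h

include hG in
theorem exists_mk_b_eq (A : ℕ → orbitRel.Quotient H α) (hA : Function.Periodic A m)
    (hinj : ∀ i j, A i = A j → i ≡ j [MOD m])
    (hadj : ∀ i, ∃ x y, Quotient.mk _ x = A i ∧ Quotient.mk _ y = A (i + 1) ∧ G.Adj x y) :
    ∃ P : VoltageCycle H G m, ∀ i, Quotient.mk _ (P.b i) = A i := by
  set b : ℕ → α := fun i => (A i).out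
  have hb (i : ℕ) : Quotient.mk (orbitRel H α) (b i) = A i := Quotient.out_eq _
  have hbper : Function.Periodic b m := fun i => by simp only [b, hA i]
  have hs (i : ℕ) : ∃ g : H, G.Adj (b i) (g • b (i + 1)) := by
    obtain ⟨x, y, hx, hy, hxy⟩ := hadj i
    exact exists_adj_smul_of_adj hG hxy (hx.trans (hb i).symm) (hy.trans (hb (i + 1)).symm)
  choose t ht using hs
  refine ⟨⟨b, fun i => t (i % m), hbper, fun i => ?_, fun i j g h => hinj i j ?_, fun i => ?_⟩, hb⟩
  · simp only [Nat.add_mod_right]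
  · rw [← hb i, ← hb j, ← h, orbitRel.Quotient.quotient_smul_eq]
  · have := ht (i % m)
    rwa [hbper.map_mod_nat, hbper.eq_of_modEq ((Nat.mod_modEq i m).add_right 1)] at this

variable [IsMulCommutative H]

def net : H := ∏ i ∈ range m, P.s i

def lift (k : ℕ) : α := (∏ i ∈ range k, P.s i) • P.b k

theorem lift_zero : P.lift 0 = P.b 0 := by simp [lift]

include hG in
theorem adj_lift (k : ℕ) : G.Adj (P.lift k) (P.lift (k + 1)) := by
  rw [lift, lift, prod_range_succ, mul_smul]
  exact hG _ (P.adj k)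

theorem lift_add_mul (k q : ℕ) : P.lift (k + q * m) = P.net ^ q • P.lift k := by
  induction q with
  | zero => simp
  | succ q ih =>
    rw [Nat.succ_mul, ← Nat.add_assoc, lift, prod_range_add, P.periodic_s.prod_range_add_left,
      P.periodic_b, mul_comm, mul_smul, ← lift, ih, ← mul_smul, pow_succ']
    rfl

theorem lift_eq_net_pow_smul (k : ℕ) : P.lift k = P.net ^ (k / m) • P.lift (k % m) := by
  rw [← P.lift_add_mul, Nat.mod_add_div']

theorem modEq_of_lift_eq {i j : ℕ} (h : P.lift i = P.lift j) : i ≡ j [MOD m] := by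
  refine P.modEq_of_smul_eq i j ((∏ k ∈ range j, P.s k)⁻¹ * ∏ k ∈ range i, P.s k) ?_
  rw [mul_smul, ← lift, h, lift, inv_smul_smul]

theorem periodic_lift : Function.Periodic P.lift (m * orderOf P.net) := fun k => by
  rw [mul_comm, lift_add_mul, pow_orderOf_eq_one, one_smul]

theorem injOn_lift (hfree : ∀ x : α, Function.Injective (· • x : H → α)) :
    Set.InjOn P.lift (Set.Iio (m * orderOf P.net)) := by
  intro i hi j hj h
  have hm : 0 < m := Nat.pos_of_mul_pos_right (Nat.zero_lt_of_lt hi)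
  have hmod : i % m = j % m := P.modEq_of_lift_eq h
  rw [P.lift_eq_net_pow_smul i, P.lift_eq_net_pow_smul j, hmod] at h
  have hdiv := (pow_eq_pow_iff_modEq.mp (hfree _ h)).eq_of_lt_of_lt
    ((Nat.div_lt_iff_lt_mul hm).mpr (by rwa [mul_comm]))
    ((Nat.div_lt_iff_lt_mul hm).mpr (by rwa [mul_comm]))
  rw [← Nat.mod_add_div i m, ← Nat.mod_add_div j m, hmod, hdiv]

include hG in
theorem exists_isCycle [Finite H] (hfree : ∀ x : α, Function.Injective (· • x : H → α))
    (hm : 3 ≤ m) : ∃ w : G.Walk (P.b 0) (P.b 0), w.IsCycle ∧ w.length = m * orderOf P.net := by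
  rw [← P.lift_zero]
  exact exists_isCycle_of_periodic (le_mul_of_le_of_one_le hm (orderOf_pos _)) P.periodic_lift
    (P.injOn_lift hfree) (P.adj_lift hG)

include hG in
def shift (j : ℕ) (g : H) : VoltageCycle H G m where
  b i := g • P.b (j + i)
  s i := P.s (j + i)
  periodic_b i := by simp only [← Nat.add_assoc, P.periodic_b (j + i)]
  periodic_s i := by simp only [← Nat.add_assoc, P.periodic_s (j + i)]
  modEq_of_smul_eq i i' h hh := by
    refine Nat.ModEq.add_left_cancel' j (P.modEq_of_smul_eq _ _ (g⁻¹ * h * g) ?_)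
    rw [mul_smul, mul_smul, hh, inv_smul_smul]
  adj i := by
    rw [← mul_smul, mul_comm, mul_smul]
    exact hG g (P.adj (j + i))

theorem net_shift (j : ℕ) (g : H) : (P.shift hG j g).net = P.net :=
  P.periodic_s.prod_range_add_left j

def setVoltage (i : ℕ) (g : H) (hg : G.Adj (P.b i) (g • P.b (i + 1))) : VoltageCycle H G m where
  b := P.b
  s k := if k % m = i % m then g else P.s k
  periodic_b := P.periodic_b
  periodic_s k := by simp only [Nat.add_mod_right, P.periodic_s k]
  modEq_of_smul_eq := P.modEq_of_smul_eq
  adj k := by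
    split_ifs with hk
    · rwa [P.b_eq_of_modEq hk, P.b_eq_of_modEq (Nat.ModEq.add_right 1 hk)]
    · exact P.adj k

theorem net_setVoltage_mul {i : ℕ} (hi : i < m) (g : H) (hg : G.Adj (P.b i) (g • P.b (i + 1))) :
    (P.setVoltage i g hg).net * P.s i = P.net * g := by
  have hmem : i ∈ range m := mem_range.mpr hi
  rw [net, net, ← mul_prod_erase _ _ hmem, ← mul_prod_erase _ _ hmem]
  have hrest : ∏ k ∈ (range m).erase i, (P.setVoltage i g hg).s k
      = ∏ k ∈ (range m).erase i, P.s k := by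
    refine prod_congr rfl fun k hk => if_neg ?_
    obtain ⟨hki, hk⟩ := mem_erase.mp hk
    rwa [Nat.mod_eq_of_lt (mem_range.mp hk), Nat.mod_eq_of_lt hi]
  rw [hrest, show (P.setVoltage i g hg).s i = g from if_pos rfl]
  ac_rfl

section Balanced

variable (hnet : ∀ Q : VoltageCycle H G m, Q.net = 1)
include hnet

theorem s_eq_of_adj {i : ℕ} (hi : i < m) {g : H} (hg : G.Adj (P.b i) (g • P.b (i + 1))) :
    P.s i = g := by
  simpa [hnet] using P.net_setVoltage_mul hi g hg

include hG in
theorem eq_of_adj_of_adj {i : ℕ} (hi : i < m) {x y z : α}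
    (hx : Quotient.mk (orbitRel H α) x = Quotient.mk _ (P.b i))
    (hy : Quotient.mk (orbitRel H α) y = Quotient.mk _ (P.b (i + 1)))
    (hz : Quotient.mk (orbitRel H α) z = Quotient.mk _ (P.b (i + 1)))
    (hxy : G.Adj x y) (hxz : G.Adj x z) : y = z := by
  obtain ⟨a, rfl⟩ := exists_smul_eq_of_mk_eq hx
  obtain ⟨c, rfl⟩ := exists_smul_eq_of_mk_eq hy
  obtain ⟨d, rfl⟩ := exists_smul_eq_of_mk_eq hz
  have hc : G.Adj (P.b i) ((a⁻¹ * c) • P.b (i + 1)) := by simpa [mul_smul] using hG a⁻¹ hxy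
  have hd : G.Adj (P.b i) ((a⁻¹ * d) • P.b (i + 1)) := by simpa [mul_smul] using hG a⁻¹ hxz
  rw [mul_left_cancel ((P.s_eq_of_adj hnet hi hc).symm.trans (P.s_eq_of_adj hnet hi hd))]

include hG in
/-- If `x` has the neighbours `y` and `k • y` one orbit back, then `y` has the neighbours `x`
and `k⁻¹ • x` one orbit ahead. -/
theorem eq_of_adj_of_adj' (hfree : ∀ x : α, Function.Injective (· • x : H → α)) {i : ℕ}
    (hi : i < m) {x y z : α}
    (hx : Quotient.mk (orbitRel H α) x = Quotient.mk _ (P.b (i + 1)))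
    (hy : Quotient.mk (orbitRel H α) y = Quotient.mk _ (P.b i))
    (hz : Quotient.mk (orbitRel H α) z = Quotient.mk _ (P.b i))
    (hxy : G.Adj x y) (hxz : G.Adj x z) : y = z := by
  obtain ⟨k, rfl⟩ := exists_smul_eq_of_mk_eq (hz.trans hy.symm)
  have hyk : G.Adj y (k⁻¹ • x) := by simpa using hG k⁻¹ hxz.symm
  have hx' : Quotient.mk (orbitRel H α) (k⁻¹ • x) = Quotient.mk _ (P.b (i + 1)) :=
    (orbitRel.Quotient.quotient_smul_eq ..).trans hx
  have hk : (1 : H) = k⁻¹ := hfree x <| show (1 : H) • x = k⁻¹ • x by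
    rw [one_smul]
    exact P.eq_of_adj_of_adj hG hnet hi hy hx hx' hxy.symm hyk
  rw [inv_eq_one.mp hk.symm, one_smul]

end Balanced

end VoltageCycle

end Voltage

section Semiregular

variable {α : Type*} {σ : Equiv.Perm α} {p : ℕ}
  (hσ : ∀ v : α, Function.minimalPeriod (fun w => σ • w) v = p)
include hσ

theorem Equiv.Perm.pow_eq_one_of_minimalPeriod_eq : σ ^ p = 1 :=
  Equiv.ext fun v => pow_smul_eq_iff_minimalPeriod_dvd.mpr (by rw [hσ v])

theorem Equiv.Perm.zpowers_pow_eq_one_of_minimalPeriod_eq (g : Subgroup.zpowers σ) : g ^ p = 1 := by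
  obtain ⟨k, hk⟩ := Subgroup.mem_zpowers_iff.mp g.2
  ext1
  rw [Subgroup.coe_pow, ← hk, ← zpow_natCast, ← zpow_mul, mul_comm, zpow_mul, zpow_natCast,
    Equiv.Perm.pow_eq_one_of_minimalPeriod_eq hσ, one_zpow, Subgroup.coe_one]

theorem Equiv.Perm.zpowers_smul_injective_of_minimalPeriod_eq (v : α) :
    Function.Injective (· • v : Subgroup.zpowers σ → α) := by
  have hstab (g : Subgroup.zpowers σ) (hg : g • v = v) : g = 1 := by
    obtain ⟨k, hk⟩ := Subgroup.mem_zpowers_iff.mp g.2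
    rw [Subgroup.smul_def, ← hk, zpow_smul_eq_iff_minimalPeriod_dvd, hσ] at hg
    obtain ⟨j, rfl⟩ := hg
    ext1
    rw [← hk, zpow_mul, zpow_natCast, Equiv.Perm.pow_eq_one_of_minimalPeriod_eq hσ, one_zpow,
      Subgroup.coe_one]
  intro g h (hgh : g • v = h • v)
  exact inv_mul_eq_one.mp (hstab _ (by rw [mul_smul, ← hgh, inv_smul_smul]))

end Semiregular

section Lift

theorem SimpleGraph.Iso.adj_zpowers_smul {α : Type*} [Finite α] {X : SimpleGraph α}
    (ρ : X ≃g X) (g : Subgroup.zpowers (ρ.toEquiv : Equiv.Perm α)) {x y : α} (h : X.Adj x y) :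
    X.Adj (g • x) (g • y) := by
  obtain ⟨n, hn⟩ := mem_powers_iff_mem_zpowers.mpr g.2
  rw [Subgroup.smul_def, Subgroup.smul_def, ← hn]
  clear hn
  dsimp only
  induction n with
  | zero => simpa using h
  | succ n ih =>
    rw [pow_succ', mul_smul, mul_smul]
    exact ρ.map_adj_iff.mpr ih

variable {α : Type*} {σ : Equiv.Perm α} {X : SimpleGraph α}
  (hX : ∀ (g : Subgroup.zpowers σ) {x y : α}, X.Adj x y → X.Adj (g • x) (g • y))
include hX

theorem liftGraph_adj_smul {u : Quotient (orbitRel (Subgroup.zpowers σ) α)}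
    (c : (quotGraph σ X).Walk u u) (g : Subgroup.zpowers σ) {x y : α}
    (h : (liftGraph σ X c).Adj x y) : (liftGraph σ X c).Adj (g • x) (g • y) :=
  ⟨hX g h.1, by simpa only [orbitRel.Quotient.quotient_smul_eq] using h.2⟩

theorem exists_voltageCycle_liftGraph {u : Quotient (orbitRel (Subgroup.zpowers σ) α)}
    {c : (quotGraph σ X).Walk u u} (hc : c.IsCycle) :
    ∃ P : VoltageCycle (Subgroup.zpowers σ) (liftGraph σ X c) c.length,
      ∀ i, Quotient.mk _ (P.b i) = c.getVert (i % c.length) := by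
  have hlen := hc.three_le_length
  refine VoltageCycle.exists_mk_b_eq (liftGraph_adj_smul hX c) _
    (fun i => by simp only [Nat.add_mod_right]) (fun i j h => ?_) (fun i => ?_)
  · exact hc.getVert_injOn' (Nat.le_sub_one_of_lt (Nat.mod_lt i (by omega)))
      (Nat.le_sub_one_of_lt (Nat.mod_lt j (by omega))) h
  · have hk := Nat.mod_lt i (show 0 < c.length by omega)
    obtain ⟨-, x, y, hx, hy, hxy⟩ := c.adj_getVert_succ hk
    refine ⟨x, y, hx, by rw [hy, ← Nat.mod_add_mod, c.getVert_mod_length hk], hxy, ?_⟩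
    rw [hx, hy]
    exact c.mk_mem_edges_iff_exists.mpr ⟨_, hk, rfl⟩

theorem card_adj_eq_one (hfree : ∀ x : α, Function.Injective (· • x : Subgroup.zpowers σ → α))
    {u : Quotient (orbitRel (Subgroup.zpowers σ) α)} {c : (quotGraph σ X).Walk u u}
    (hc : c.IsCycle)
    (hnet : ∀ P : VoltageCycle (Subgroup.zpowers σ) (liftGraph σ X c) c.length, P.net = 1)
    {a : α} {B : Quotient (orbitRel (Subgroup.zpowers σ) α)}
    (he : s(Quotient.mk _ a, B) ∈ c.edges) :
    Nat.card {b : α // Quotient.mk _ b = B ∧ X.Adj a b} = 1 := by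
  obtain ⟨P, hP⟩ := exists_voltageCycle_liftGraph hX hc
  have hG := liftGraph_adj_smul hX c
  obtain ⟨-, x, y, hx, hy, hxy⟩ := c.adj_of_mem_edges he
  obtain ⟨g, hg⟩ := exists_adj_smul_of_adj hX hxy hx rfl
  refine Nat.card_eq_one_iff_exists.mpr
    ⟨⟨g • y, (orbitRel.Quotient.quotient_smul_eq ..).trans hy, hg⟩, ?_⟩
  rintro ⟨z, hz, haz⟩
  have hlift {w : α} (hw : Quotient.mk _ w = B) (haw : X.Adj a w) :
      (liftGraph σ X c).Adj a w := ⟨haw, by rw [hw]; exact he⟩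
  have hgy : Quotient.mk _ (g • y) = B := (orbitRel.Quotient.quotient_smul_eq ..).trans hy
  obtain ⟨i, hi, hei⟩ := c.mk_mem_edges_iff_exists.mp he
  have hPi : Quotient.mk _ (P.b i) = c.getVert i := by rw [hP, Nat.mod_eq_of_lt hi]
  have hPi1 : Quotient.mk _ (P.b (i + 1)) = c.getVert (i + 1) := by
    rw [hP, c.getVert_mod_length hi]
  refine Subtype.ext ?_
  rcases Sym2.eq_iff.mp hei with ⟨h1, h2⟩ | ⟨h1, h2⟩
  · exact P.eq_of_adj_of_adj hG hnet hi (by rw [hPi, h1]) (by rw [hz, hPi1, h2])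
      (by rw [hgy, hPi1, h2]) (hlift hz haz) (hlift hgy hg)
  · exact P.eq_of_adj_of_adj' hG hnet hfree hi (by rw [hPi1, h2]) (by rw [hz, hPi, h1])
      (by rw [hgy, hPi, h1]) (hlift hz haz) (hlift hgy hg)

theorem exists_isCycle_length [Finite α]
    (hfree : ∀ x : α, Function.Injective (· • x : Subgroup.zpowers σ → α))
    {u : Quotient (orbitRel (Subgroup.zpowers σ) α)} {c : (quotGraph σ X).Walk u u}
    (hc : c.IsCycle) (hcard : c.length = Nat.card (Quotient (orbitRel (Subgroup.zpowers σ) α)))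
    (hnet : ∀ P : VoltageCycle (Subgroup.zpowers σ) (liftGraph σ X c) c.length, P.net = 1)
    (v : α) : ∃ w : (liftGraph σ X c).Walk v v, w.IsCycle ∧ w.length = c.length := by
  obtain ⟨P, hP⟩ := exists_voltageCycle_liftGraph hX hc
  obtain ⟨i, hi, hiv⟩ := hc.exists_getVert_eq_of_length_eq_card hcard (Quotient.mk _ v)
  obtain ⟨g, rfl⟩ := exists_smul_eq_of_mk_eq (hiv.symm.trans (by rw [hP, Nat.mod_eq_of_lt hi]))
  have hG := liftGraph_adj_smul hX c
  obtain ⟨w, hw, hwl⟩ := (P.shift hG i g).exists_isCycle hG hfree hc.three_le_length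
  rw [hnet, orderOf_one, mul_one] at hwl
  exact ⟨w, hw, hwl⟩

theorem exists_isCycle_length_mul [Finite α] {p : ℕ} [Fact p.Prime]
    (hσ : ∀ v : α, Function.minimalPeriod (fun w => σ • w) v = p)
    {u : Quotient (orbitRel (Subgroup.zpowers σ) α)} {c : (quotGraph σ X).Walk u u}
    (hc : c.IsCycle) (P : VoltageCycle (Subgroup.zpowers σ) (liftGraph σ X c) c.length)
    (hP : P.net ≠ 1) :
    ∃ (v : α) (w : (liftGraph σ X c).Walk v v), w.IsCycle ∧ w.length = c.length * p := by
  have hG := liftGraph_adj_smul hX c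
  obtain ⟨w, hw, hwl⟩ := P.exists_isCycle hG
    (Equiv.Perm.zpowers_smul_injective_of_minimalPeriod_eq hσ) hc.three_le_length
  rw [orderOf_eq_prime (Equiv.Perm.zpowers_pow_eq_one_of_minimalPeriod_eq hσ _) hP] at hwl
  exact ⟨_, w, hw, hwl⟩

end Lift

/-- Let `X` be a graph with an `(m,p)`-semiregular automorphism `ρ` (`p` prime: `ρ` has
exactly `m` orbits, each of size `p`), and let `C` be a cycle of length `m` in the quotient
graph. Then the lift of `C` either contains a cycle of length `mp`, or it consists of `p`
disjoint `m`-cycles; in the latter case every vertex has exactly one neighbor in each orbit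
adjacent to its own along `C`. -/
theorem stmt_15 (X : SimpleGraph V) (ρ : X ≃g X) (m p : ℕ) (hp : p.Prime)
    (horb : ∀ v : V,
      Nat.card (orbit (Subgroup.zpowers (ρ.toEquiv : Equiv.Perm V)) v) = p)
    (hm : Nat.card (Quotient (orbitRel (Subgroup.zpowers (ρ.toEquiv : Equiv.Perm V)) V)) = m)
    {u : Quotient (orbitRel (Subgroup.zpowers (ρ.toEquiv : Equiv.Perm V)) V)}
    (c : (quotGraph (ρ.toEquiv : Equiv.Perm V) X).Walk u u)
    (hc : c.IsCycle) (hlen : c.length = m) :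
    (∃ (v : V) (w : (liftGraph (ρ.toEquiv : Equiv.Perm V) X c).Walk v v),
        w.IsCycle ∧ w.length = m * p) ∨
    ((∀ v : V, ∃ w : (liftGraph (ρ.toEquiv : Equiv.Perm V) X c).Walk v v,
        w.IsCycle ∧ w.length = m) ∧
      ∀ (a : V) (B : Quotient (orbitRel (Subgroup.zpowers (ρ.toEquiv : Equiv.Perm V)) V)),
        s(Quotient.mk _ a, B) ∈ c.edges →
        Nat.card {b : V // Quotient.mk _ b = B ∧ X.Adj a b} = 1) := by
  subst hlen
  have := Fact.mk hp
  have hσ (v : V) : Function.minimalPeriod (fun w => ρ.toEquiv • w) v = p := by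
    rw [← horb v, Nat.card_congr (orbitZPowersEquiv _ v), Nat.card_zmod]
  have hfree := Equiv.Perm.zpowers_smul_injective_of_minimalPeriod_eq hσ
  have hX := ρ.adj_zpowers_smul
  by_cases hnet : ∃ P : VoltageCycle (Subgroup.zpowers ρ.toEquiv) (liftGraph ρ.toEquiv X c)
    c.length, P.net ≠ 1
  · obtain ⟨P, hP⟩ := hnet
    exact .inl (exists_isCycle_length_mul hX hσ hc P hP)
  · push Not at hnet
    exact .inr ⟨exists_isCycle_length hX hfree hc hm.symm hnet,
      fun a B he => card_adj_eq_one hX hfree hc hnet he⟩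
end
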